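/- The function ψ(x) = (2/x²)∫₀ˣ log(1+y) dy satisfies ψ(x) ≥ 1/(1 + x/3) for all x ≥ -1 (with x ≠ 0 interpreted by continuity ψ(0) = 1). -/

import Mathlib

open Real

/-- The function ψ appearing in the Dzhaparidze-van Zanten inequality,
with the convention ψ(0) = 1 (its limit by continuity). -/
noncomputable def psi (x : ℝ) : ℝ :=
  if x = 0 then 1 else (2 / x ^ 2) * ∫ y in (0 : ℝ)..x, Real.log (1 + y)

/-!
Since `∫₀ˣ log (1 + y) dy = (1 + x) log (1 + x) - x`, the inequality amounts to the rational
lower bound `log (1 + x) ≥ x (6 + 5x) / (2 (1 + x) (3 + x))`. The difference of the two sides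
vanishes at `0` and has derivative `x³ / ((1 + x)² (3 + x)²)`, which has the sign of `x`,
so `0` is its minimum on `(-1, ∞)`.
-/

theorem isMinOn_of_sub_mul_deriv_nonneg {f f' : ℝ → ℝ} {s : Set ℝ} {a : ℝ}
    (hs : s.OrdConnected) (ha : a ∈ s) (hf : ∀ y ∈ s, HasDerivAt f (f' y) y)
    (hsign : ∀ y ∈ s, 0 ≤ (y - a) * f' y) : IsMinOn f s a := by
  intro x hx
  have hcont (b c : ℝ) (hb : b ∈ s) (hc : c ∈ s) : ContinuousOn f (Set.Icc b c) :=
    fun y hy ↦ (hf y (hs.out hb hc hy)).continuousAt.continuousWithinAt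
  rcases le_total a x with hax | hxa
  · refine monotoneOn_of_hasDerivWithinAt_nonneg (f' := f') (convex_Icc a x) (hcont a x ha hx)
      ?_ ?_ (Set.left_mem_Icc.2 hax) (Set.right_mem_Icc.2 hax) hax
    all_goals
      rw [interior_Icc]
      intro y hy
      have hys : y ∈ s := hs.out ha hx (Set.Ioo_subset_Icc_self hy)
    · exact (hf y hys).hasDerivWithinAt
    · exact nonneg_of_mul_nonneg_right (hsign y hys) (sub_pos.2 hy.1)
  · refine antitoneOn_of_hasDerivWithinAt_nonpos (f' := f') (convex_Icc x a) (hcont x a hx ha)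
      ?_ ?_ (Set.left_mem_Icc.2 hxa) (Set.right_mem_Icc.2 hxa) hxa
    all_goals
      rw [interior_Icc]
      intro y hy
      have hys : y ∈ s := hs.out hx ha (Set.Ioo_subset_Icc_self hy)
    · exact (hf y hys).hasDerivWithinAt
    · exact nonpos_of_mul_nonneg_right (hsign y hys) (sub_neg.2 hy.2)

theorem hasDerivAt_log_one_add_sub_rational {y : ℝ} (hy : -1 < y) :
    HasDerivAt (fun y ↦ log (1 + y) - y * (6 + 5 * y) / (2 * (1 + y) * (3 + y)))
      (y ^ 3 / ((1 + y) ^ 2 * (3 + y) ^ 2)) y := by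
  have h1 : 1 + y ≠ 0 := by linarith
  have h3 : 3 + y ≠ 0 := by linarith
  have hlog : HasDerivAt (fun y ↦ log (1 + y)) (1 / (1 + y)) y := by
    simpa using ((hasDerivAt_id y).const_add 1).log h1
  have hnum : HasDerivAt (fun y ↦ y * (6 + 5 * y)) (6 + 10 * y) y := by
    refine ((hasDerivAt_id' y).mul (((hasDerivAt_id' y).const_mul 5).const_add 6)).congr_deriv ?_
    ring
  have hden : HasDerivAt (fun y ↦ 2 * (1 + y) * (3 + y)) (8 + 4 * y) y := by
    refine ((((hasDerivAt_id' y).const_add 1).const_mul 2).mul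
      ((hasDerivAt_id' y).const_add 3)).congr_deriv ?_
    ring
  refine (hlog.sub (hnum.div hden (by positivity))).congr_deriv ?_
  field_simp
  ring

theorem div_le_log_one_add {x : ℝ} (hx : -1 < x) :
    x * (6 + 5 * x) / (2 * (1 + x) * (3 + x)) ≤ log (1 + x) := by
  have hmin := isMinOn_of_sub_mul_deriv_nonneg Set.ordConnected_Ioi
    (Set.mem_Ioi.2 neg_one_lt_zero)
    (fun y hy ↦ hasDerivAt_log_one_add_sub_rational hy)
    (fun y hy ↦ by
      have : 0 < 1 + y := by linarith [Set.mem_Ioi.1 hy]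
      rw [sub_zero, ← mul_div_assoc, show y * y ^ 3 = y ^ 4 by ring]
      positivity)
    (Set.mem_Ioi.2 hx)
  simp only [Set.mem_ofPred_eq, add_zero, log_one, zero_mul, zero_div, sub_zero] at hmin
  linarith

theorem integral_log_one_add (x : ℝ) :
    ∫ y in (0 : ℝ)..x, log (1 + y) = (1 + x) * log (1 + x) - x := by
  rw [intervalIntegral.integral_comp_add_left (fun y ↦ log y), integral_log]
  simp only [add_zero, log_one, mul_zero]
  ring

theorem psi_of_ne_zero {x : ℝ} (hx : x ≠ 0) :
    psi x = 2 / x ^ 2 * ((1 + x) * log (1 + x) - x) := by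
  rw [psi, if_neg hx, integral_log_one_add]

theorem stmt_3 (x : ℝ) (hx : -1 ≤ x) :
    1 / (1 + x / 3) ≤ psi x := by
  rcases eq_or_ne x 0 with rfl | hx0
  · simp [psi]
  rw [psi_of_ne_zero hx0]
  rcases hx.eq_or_lt with rfl | hx1
  · norm_num
  have h1 : 0 < 1 + x := by linarith
  have h3 : 0 < 3 + x := by linarith
  calc 1 / (1 + x / 3)
      = 2 / x ^ 2 * ((1 + x) * (x * (6 + 5 * x) / (2 * (1 + x) * (3 + x))) - x) := by
        field_simp
        ring
    _ ≤ 2 / x ^ 2 * ((1 + x) * log (1 + x) - x) := by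
        gcongr
        exact div_le_log_one_add hx1
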